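/- arXiv:0907.0465 — 5 statements merged into one kernel-verified Lean document; each statement's English description precedes it below -/
import Mathlib

section
/- The derivations δ_X, δ_Y, δ_Z on the smooth quantum Heisenberg manifold algebra satisfy the commutation relations [δ_X, δ_Y] = -c δ_Z (equivalently δ_X δ_Y - δ_Y δ_X = -c δ_Z, matching the Heisenberg bracket [X,Y] = -cZ), [δ_Y, δ_Z] = 0, and [δ_Z, δ_X] = 0, when applied to any smooth function φ : ℝ × ℝ × ℤ → ℂ. -/
open Real

noncomputable def deltaX (φ : ℝ → ℝ → ℤ → ℂ) (x y : ℝ) (p : ℤ) : ℂ :=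
  -deriv (fun t => φ t y p) x

noncomputable def deltaY (c : ℕ) (μ : ℝ) (φ : ℝ → ℝ → ℤ → ℂ) (x y : ℝ) (p : ℤ) : ℂ :=
  -deriv (fun t => φ x t p) y
    + 2 * (π : ℂ) * Complex.I * (c : ℂ) * (p : ℂ) * ((x : ℂ) - (p : ℂ) * (μ : ℂ)) * φ x y p

noncomputable def deltaZ (φ : ℝ → ℝ → ℤ → ℂ) (x y : ℝ) (p : ℤ) : ℂ :=
  2 * (π : ℂ) * Complex.I * (p : ℂ) * φ x y p

lemma hdX (F : ℝ × ℝ → ℂ) (hF : Differentiable ℝ F) (x y : ℝ) :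
    HasDerivAt (fun t => F (t, y)) (fderiv ℝ F (x, y) (1, 0)) x := by
  have hl : HasDerivAt (fun t : ℝ => ((t, y) : ℝ × ℝ)) ((1 : ℝ), (0 : ℝ)) x :=
    HasDerivAt.prodMk (hasDerivAt_id x) (hasDerivAt_const x y)
  exact (hF (x, y)).hasFDerivAt.comp_hasDerivAt x hl

lemma hdY (F : ℝ × ℝ → ℂ) (hF : Differentiable ℝ F) (x y : ℝ) :
    HasDerivAt (fun t => F (x, t)) (fderiv ℝ F (x, y) (0, 1)) y := by
  have hl : HasDerivAt (fun t : ℝ => ((x, t) : ℝ × ℝ)) ((0 : ℝ), (1 : ℝ)) y :=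
    HasDerivAt.prodMk (hasDerivAt_const y x) (hasDerivAt_id y)
  exact (hF (x, y)).hasFDerivAt.comp_hasDerivAt y hl

lemma hdmixX (F : ℝ × ℝ → ℂ) (hF : ContDiff ℝ (⊤ : ℕ∞) (fderiv ℝ F)) (x y : ℝ) (w : ℝ × ℝ) :
    HasDerivAt (fun t => fderiv ℝ F (t, y) w) (fderiv ℝ (fderiv ℝ F) (x, y) (1, 0) w) x := by
  have h1 : HasFDerivAt (fderiv ℝ F) (fderiv ℝ (fderiv ℝ F) (x, y)) (x, y) :=
    (hF.differentiable (by simp) _).hasFDerivAt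
  have h2 := (ContinuousLinearMap.apply ℝ ℂ w).hasFDerivAt.comp (x, y) h1
  have hl : HasDerivAt (fun t : ℝ => ((t, y) : ℝ × ℝ)) ((1 : ℝ), (0 : ℝ)) x :=
    HasDerivAt.prodMk (hasDerivAt_id x) (hasDerivAt_const x y)
  exact h2.comp_hasDerivAt x hl

lemma hdmixY (F : ℝ × ℝ → ℂ) (hF : ContDiff ℝ (⊤ : ℕ∞) (fderiv ℝ F)) (x y : ℝ) (w : ℝ × ℝ) :
    HasDerivAt (fun t => fderiv ℝ F (x, t) w) (fderiv ℝ (fderiv ℝ F) (x, y) (0, 1) w) y := by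
  have h1 : HasFDerivAt (fderiv ℝ F) (fderiv ℝ (fderiv ℝ F) (x, y)) (x, y) :=
    (hF.differentiable (by simp) _).hasFDerivAt
  have h2 := (ContinuousLinearMap.apply ℝ ℂ w).hasFDerivAt.comp (x, y) h1
  have hl : HasDerivAt (fun t : ℝ => ((x, t) : ℝ × ℝ)) ((0 : ℝ), (1 : ℝ)) y :=
    HasDerivAt.prodMk (hasDerivAt_const y x) (hasDerivAt_id y)
  exact h2.comp_hasDerivAt y hl

/-- The derivations δ_X, δ_Y, δ_Z satisfy [δ_X, δ_Y] = -c δ_Z, [δ_Y, δ_Z] = 0,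
[δ_Z, δ_X] = 0 on smooth functions, matching the Heisenberg brackets. -/
theorem stmt2 (c : ℕ) (hc : 0 < c) (μ : ℝ) (hμ : μ ≠ 0)
    (φ : ℝ → ℝ → ℤ → ℂ)
    (hφ : ∀ p : ℤ, ContDiff ℝ (⊤ : ℕ∞) (fun xy : ℝ × ℝ => φ xy.1 xy.2 p)) :
    (∀ x y p, deltaX (deltaY c μ φ) x y p - deltaY c μ (deltaX φ) x y p
        = -(c : ℂ) * deltaZ φ x y p) ∧
    (∀ x y p, deltaY c μ (deltaZ φ) x y p - deltaZ (deltaY c μ φ) x y p = 0) ∧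
    (∀ x y p, deltaZ (deltaX φ) x y p - deltaX (deltaZ φ) x y p = 0) := by
  have hFd : ∀ p : ℤ, Differentiable ℝ (fun xy : ℝ × ℝ => φ xy.1 xy.2 p) :=
    fun p => (hφ p).differentiable (by simp)
  have hF' : ∀ p : ℤ, ContDiff ℝ (⊤ : ℕ∞) (fderiv ℝ (fun xy : ℝ × ℝ => φ xy.1 xy.2 p)) :=
    fun p => (hφ p).fderiv_right (by simp)
  refine ⟨?_, ?_, ?_⟩
  · intro x y p
    set F : ℝ × ℝ → ℂ := fun xy => φ xy.1 xy.2 p with hFdef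
    have hx : ∀ a b : ℝ, deriv (fun t => φ t b p) a = fderiv ℝ F (a, b) (1, 0) :=
      fun a b => (hdX F (hFd p) a b).deriv
    have hy : ∀ a b : ℝ, deriv (fun t => φ a t p) b = fderiv ℝ F (a, b) (0, 1) :=
      fun a b => (hdY F (hFd p) a b).deriv
    set k0 : ℂ := 2 * (π : ℂ) * Complex.I * (c : ℂ) * (p : ℂ) with hk0
    -- derivative of the affine factor
    have hlin : ∀ a : ℝ, HasDerivAt (fun t : ℝ => k0 * ((t : ℂ) - (p : ℂ) * (μ : ℂ))) k0 a := by
      intro a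
      have h1 : HasDerivAt (fun t : ℝ => ((t : ℂ))) 1 a := by
        exact Complex.ofRealCLM.hasDerivAt (x := a)
      simpa using ((h1.sub_const ((p : ℂ) * (μ : ℂ))).const_mul k0)
    -- derivative in x of deltaY φ
    have hXY : deriv (fun t => deltaY c μ φ t y p) x
        = -(fderiv ℝ (fderiv ℝ F) (x, y) (1, 0) (0, 1))
          + (k0 * F (x, y) + k0 * ((x : ℂ) - (p : ℂ) * (μ : ℂ)) * fderiv ℝ F (x, y) (1, 0)) := by
      have heq : (fun t => deltaY c μ φ t y p)
          = fun t => -(fderiv ℝ F (t, y) (0, 1))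
              + (k0 * ((t : ℂ) - (p : ℂ) * (μ : ℂ))) * F (t, y) := by
        funext t
        simp only [deltaY, hy t y]
        rfl
      rw [heq]
      exact (((hdmixX F (hF' p) x y (0, 1)).neg).add
        ((hlin x).mul (hdX F (hFd p) x y))).deriv
    have hYX : deriv (fun s => deltaX φ x s p) y
        = -(fderiv ℝ (fderiv ℝ F) (x, y) (0, 1) (1, 0)) := by
      have heq : (fun s => deltaX φ x s p) = fun s => -(fderiv ℝ F (x, s) (1, 0)) := by
        funext s; simp only [deltaX, hx x s]
      rw [heq]
      exact ((hdmixY F (hF' p) x y (1, 0)).neg).deriv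
    have hsym := (((hφ p).contDiffAt (x := ((x, y) : ℝ × ℝ))).isSymmSndFDerivAt (by rw [minSmoothness_of_isRCLikeNormedField]; exact WithTop.coe_le_coe.mpr (le_top : (2 : ℕ∞) ≤ ⊤))) ((1 : ℝ), (0 : ℝ)) ((0 : ℝ), (1 : ℝ))
    rw [← hFdef] at hsym
    have e1 : deltaX (deltaY c μ φ) x y p = -deriv (fun t => deltaY c μ φ t y p) x := rfl
    have e2 : deltaY c μ (deltaX φ) x y p
        = -deriv (fun s => deltaX φ x s p) y
          + k0 * ((x : ℂ) - (p : ℂ) * (μ : ℂ)) * deltaX φ x y p := rfl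
    rw [e1, e2, hXY, hYX, deltaX, deltaZ, hx x y, hsym]
    have hf : F (x, y) = φ x y p := rfl
    rw [hf, hk0]
    ring
  · intro x y p
    set F : ℝ × ℝ → ℂ := fun xy => φ xy.1 xy.2 p with hFdef
    have hdiff : DifferentiableAt ℝ (fun t => φ x t p) y := (hdY F (hFd p) x y).differentiableAt
    have h1 : deriv (fun t => 2 * (π : ℂ) * Complex.I * (p : ℂ) * φ x t p) y
        = 2 * (π : ℂ) * Complex.I * (p : ℂ) * deriv (fun t => φ x t p) y :=
      deriv_const_mul _ hdiff
    simp only [deltaY, deltaZ]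
    rw [h1]
    ring
  · intro x y p
    set F : ℝ × ℝ → ℂ := fun xy => φ xy.1 xy.2 p with hFdef
    have hdiff : DifferentiableAt ℝ (fun t => φ t y p) x := (hdX F (hFd p) x y).differentiableAt
    have h1 : deriv (fun t => 2 * (π : ℂ) * Complex.I * (p : ℂ) * φ t y p) x
        = 2 * (π : ℂ) * Complex.I * (p : ℂ) * deriv (fun t => φ t y p) x :=
      deriv_const_mul _ hdiff
    simp only [deltaX, deltaZ]
    rw [h1]
    ring
end

section
/- The operator ∇⁰_Y defined on Schwartz functions f : ℝ × ℝ → ℂ by (∇⁰_Y f)(x,y) = -∂f/∂y(x,y) + (πci/(2μ)) x² f(x,y) satisfies the connection Leibniz rule ∇⁰_Y(f·φ) = (∇⁰_Y f)·φ + f·δ_Y(φ), where the right module action is (f·φ)(x,y) = Σ_p conj(φ)(x+2pμ, y+2pν, p) f(x+2pμ, y+2pν) and (δ_Y φ)(x,y,p) = -∂φ/∂y(x,y,p) + 2πi c p (x - pμ) φ(x,y,p). -/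
open Real

/-- The right module action (f·φ)(x,y) = Σ_p conj(φ(x+2pμ, y+2pν, p)) f(x+2pμ, y+2pν). -/
noncomputable def act (μ ν : ℝ) (f : ℝ → ℝ → ℂ) (φ : ℝ → ℝ → ℤ → ℂ) (x y : ℝ) : ℂ :=
  ∑' p : ℤ, (starRingEnd ℂ) (φ (x + 2 * p * μ) (y + 2 * p * ν) p) * f (x + 2 * p * μ) (y + 2 * p * ν)

noncomputable def nablaY (c : ℕ) (μ : ℝ) (f : ℝ → ℝ → ℂ) (x y : ℝ) : ℂ :=
  -deriv (fun t => f x t) y + (π : ℂ) * (c : ℂ) * Complex.I / (2 * (μ : ℂ)) * (x : ℂ) ^ 2 * f x y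

/-- ∇⁰_Y satisfies the connection Leibniz rule ∇⁰_Y(f·φ) = (∇⁰_Y f)·φ + f·δ_Y(φ). -/
theorem stmt3 (c : ℕ) (hc : 0 < c) (μ ν : ℝ) (hμ : μ ≠ 0) (hν : ν ≠ 0)
    (f : SchwartzMap (ℝ × ℝ) ℂ) (φ : ℝ → ℝ → ℤ → ℂ)
    (hφ : ∀ p : ℤ, ContDiff ℝ (⊤ : ℕ∞) (fun xy : ℝ × ℝ => φ xy.1 xy.2 p))
    (hφfin : {p : ℤ | ∃ x y, φ x y p ≠ 0}.Finite) :
    ∀ x y : ℝ,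
      nablaY c μ (act μ ν (fun a b => f (a, b)) φ) x y
        = act μ ν (nablaY c μ (fun a b => f (a, b))) φ x y
          + act μ ν (fun a b => f (a, b)) (deltaY c μ φ) x y := by
  intro x y
  classical
  have hμ' : (μ : ℂ) ≠ 0 := Complex.ofReal_ne_zero.2 hμ
  set S := hφfin.toFinset with hSdef
  have hzero : ∀ p : ℤ, p ∉ S → ∀ a b : ℝ, φ a b p = 0 := by
    intro p hp a b
    by_contra h
    exact hp (hφfin.mem_toFinset.2 ⟨a, b, h⟩)
  have hfd : ∀ a b : ℝ, HasDerivAt (fun t => f (a, t)) (deriv (fun t => f (a, t)) b) b := by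
    intro a b
    exact (((f.differentiable).comp
      ((differentiable_const a).prodMk differentiable_id)) b).hasDerivAt
  have hφd : ∀ (p : ℤ) (a b : ℝ),
      HasDerivAt (fun t => φ a t p) (deriv (fun t => φ a t p) b) b := by
    intro p a b
    exact ((((hφ p).differentiable (by simp)).comp
      ((differentiable_const a).prodMk differentiable_id)) b).hasDerivAt
  -- abbreviations
  set X : ℤ → ℝ := fun p => x + 2 * p * μ with hX
  set Y : ℤ → ℝ := fun p => y + 2 * p * ν with hY
  -- the per-term derivative
  have hterm : ∀ p : ℤ,
      HasDerivAt (fun t => (starRingEnd ℂ) (φ (X p) (t + 2 * p * ν) p) * f (X p, t + 2 * p * ν))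
        ((starRingEnd ℂ) (deriv (fun s => φ (X p) s p) (Y p)) * f (X p, Y p)
          + (starRingEnd ℂ) (φ (X p) (Y p) p) * deriv (fun s => f (X p, s)) (Y p)) y := by
    intro p
    simp only [hX, hY]
    have h1 : HasDerivAt (fun t => φ (x + 2*p*μ) (t + 2 * p * ν) p)
        (deriv (fun s => φ (x + 2*p*μ) s p) (y + 2*p*ν)) y := by
      exact HasDerivAt.comp_add_const y _ (hφd p (x + 2*p*μ) (y + 2*p*ν))
    have h2 : HasDerivAt (fun t => f (x + 2*p*μ, t + 2 * p * ν))
        (deriv (fun s => f (x + 2*p*μ, s)) (y + 2*p*ν)) y := by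
      exact HasDerivAt.comp_add_const y _ (hfd (x + 2*p*μ) (y + 2*p*ν))
    have h1c : HasDerivAt (fun t => (starRingEnd ℂ) (φ (x + 2*p*μ) (t + 2 * p * ν) p))
        ((starRingEnd ℂ) (deriv (fun s => φ (x + 2*p*μ) s p) (y + 2*p*ν))) y := by
      exact h1.star
    exact h1c.mul h2
  -- rewrite act as a finite sum
  have hact : ∀ t : ℝ, act μ ν (fun a b => f (a, b)) φ x t
      = ∑ p ∈ S, (starRingEnd ℂ) (φ (X p) (t + 2 * p * ν) p) * f (X p, t + 2 * p * ν) := by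
    intro t
    exact tsum_eq_sum (by intro p hp; simp [hzero p hp])
  have hderiv : deriv (fun t => act μ ν (fun a b => f (a, b)) φ x t) y
      = ∑ p ∈ S, ((starRingEnd ℂ) (deriv (fun s => φ (X p) s p) (Y p)) * f (X p, Y p)
          + (starRingEnd ℂ) (φ (X p) (Y p) p) * deriv (fun s => f (X p, s)) (Y p)) := by
    have hsum : HasDerivAt (fun t => ∑ p ∈ S,
        (starRingEnd ℂ) (φ (X p) (t + 2 * p * ν) p) * f (X p, t + 2 * p * ν))
        (∑ p ∈ S, ((starRingEnd ℂ) (deriv (fun s => φ (X p) s p) (Y p)) * f (X p, Y p)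
          + (starRingEnd ℂ) (φ (X p) (Y p) p) * deriv (fun s => f (X p, s)) (Y p))) y :=
      HasDerivAt.fun_sum (fun p _ => hterm p)
    rw [funext hact]
    exact hsum.deriv
  -- RHS first sum
  have hrhs1 : act μ ν (nablaY c μ (fun a b => f (a, b))) φ x y
      = ∑ p ∈ S, (starRingEnd ℂ) (φ (X p) (Y p) p)
          * (-deriv (fun s => f (X p, s)) (Y p)
            + (π : ℂ) * (c : ℂ) * Complex.I / (2 * (μ : ℂ)) * ((X p : ℝ) : ℂ) ^ 2 * f (X p, Y p)) := by
    exact tsum_eq_sum (by intro p hp; simp [hzero p hp])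
  -- RHS second sum
  have hrhs2 : act μ ν (fun a b => f (a, b)) (deltaY c μ φ) x y
      = ∑ p ∈ S, (starRingEnd ℂ) (deltaY c μ φ (X p) (Y p) p) * f (X p, Y p) := by
    refine tsum_eq_sum ?_
    intro p hp
    have h0 : (fun t => φ (x + 2 * p * μ) t p) = fun _ => (0 : ℂ) :=
      funext fun t => hzero p hp _ t
    simp [deltaY, h0, hzero p hp]
  rw [nablaY, hderiv, hact y, hrhs1, hrhs2, ← Finset.sum_add_distrib,
    ← Finset.sum_neg_distrib, Finset.mul_sum, ← Finset.sum_add_distrib]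
  refine Finset.sum_congr rfl ?_
  intro p _
  simp only [hX, hY, deltaY, map_add, map_neg, map_mul, map_sub, Complex.conj_I,
    Complex.conj_ofReal, map_ofNat, map_natCast, map_intCast]
  push_cast
  field_simp
  ring
end

section
/- Let τ be a positive faithful trace on a *-algebra E, and suppose Θ⁰(Z_i,Z_j) = κ(Z_i,Z_j)·1 is a scalar-valued (constant curvature) alternating form on pairs from a finite index set, with κ complex-valued. Let Ω(Z_i,Z_j) ∈ E be any alternating E-valued 2-form and set Θ = Θ⁰ + Ω. If Σ_{i<j} κ(Z_i,Z_j) τ(Ω(Z_i,Z_j)) = 0, then -τ(Σ_{i<j} Θ(Z_i,Z_j)²) ≥ -τ(Σ_{i<j} Θ⁰(Z_i,Z_j)²) whenever each Ω(Z_i,Z_j) is skew-adjoint (Ω(Z_i,Z_j)* = -Ω(Z_i,Z_j)). In other words, YM(Θ) = YM(Θ⁰) + τ(Σ_{i<j} Ω(Z_i,Z_j)* Ω(Z_i,Z_j)) ≥ YM(Θ⁰). -/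
open scoped ComplexOrder

/-- If Θ⁰ = κ·1 has constant (scalar) curvature, Ω is a skew-adjoint-valued
alternating perturbation and the cross-term Σ_{i<j} κ(Z_i,Z_j) τ(Ω(Z_i,Z_j))
vanishes, then YM(Θ⁰+Ω) = YM(Θ⁰) + τ(Σ_{i<j} Ω(Z_i,Z_j)* Ω(Z_i,Z_j)) ≥ YM(Θ⁰),
where YM(Φ) = -τ(Σ_{i<j} Φ(Z_i,Z_j)²). -/
theorem stmt14 (E : Type*) [Ring E] [StarRing E] [Algebra ℂ E] (n : ℕ)
    (τ : E →ₗ[ℂ] ℂ)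
    (htr : ∀ a b : E, τ (a * b) = τ (b * a))
    (hpos : ∀ a : E, 0 ≤ τ (star a * a))
    (κ : Fin n → Fin n → ℂ) (Ω : Fin n → Fin n → E)
    (hskew : ∀ i j, star (Ω i j) = -Ω i j)
    (hcross : (∑ i : Fin n, ∑ j : Fin n, if i < j then κ i j * τ (Ω i j) else 0) = 0) :
    (-τ (∑ i : Fin n, ∑ j : Fin n, if i < j then
          (κ i j • (1 : E) + Ω i j) * (κ i j • (1 : E) + Ω i j) else 0)
      = -τ (∑ i : Fin n, ∑ j : Fin n, if i < j then
            (κ i j • (1 : E)) * (κ i j • (1 : E)) else 0)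
        + τ (∑ i : Fin n, ∑ j : Fin n, if i < j then star (Ω i j) * Ω i j else 0)) ∧
    -τ (∑ i : Fin n, ∑ j : Fin n, if i < j then
          (κ i j • (1 : E)) * (κ i j • (1 : E)) else 0)
      ≤ -τ (∑ i : Fin n, ∑ j : Fin n, if i < j then
            (κ i j • (1 : E) + Ω i j) * (κ i j • (1 : E) + Ω i j) else 0) := by

  have hτ0 : (0:ℂ) ≤ τ (∑ i : Fin n, ∑ j : Fin n, if i < j then star (Ω i j) * Ω i j else 0) := by
    simp only [map_sum, apply_ite τ, map_zero]
    refine Finset.sum_nonneg fun i _ => Finset.sum_nonneg fun j _ => ?_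
    split
    · exact hpos _
    · exact le_refl 0
  have heq : τ (∑ i : Fin n, ∑ j : Fin n, if i < j then
          (κ i j • (1 : E) + Ω i j) * (κ i j • (1 : E) + Ω i j) else 0)
      = τ (∑ i : Fin n, ∑ j : Fin n, if i < j then
            (κ i j • (1 : E)) * (κ i j • (1 : E)) else 0)
        - τ (∑ i : Fin n, ∑ j : Fin n, if i < j then star (Ω i j) * Ω i j else 0)
        + 2 * (∑ i : Fin n, ∑ j : Fin n, if i < j then κ i j * τ (Ω i j) else 0) := by
    simp only [map_sum, apply_ite τ, map_zero, Finset.mul_sum,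
      ← Finset.sum_sub_distrib, ← Finset.sum_add_distrib]
    refine Finset.sum_congr rfl fun i _ => Finset.sum_congr rfl fun j _ => ?_
    split
    · have hs : star (Ω i j) * Ω i j = -(Ω i j * Ω i j) := by
        rw [hskew]; exact neg_mul _ _
      rw [hs]
      have hexp : (κ i j • (1 : E) + Ω i j) * (κ i j • (1 : E) + Ω i j)
          = (κ i j • (1 : E)) * (κ i j • (1 : E)) + Ω i j * Ω i j
            + (κ i j • Ω i j + κ i j • Ω i j) := by
        simp [add_mul, mul_add, smul_mul_assoc, mul_smul_comm]
        abel
      rw [hexp]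
      simp only [map_add, map_neg, map_smul, smul_eq_mul]
      ring
    · ring
  refine ⟨?_, ?_⟩
  · rw [heq, hcross]; ring
  · have h2 : ∀ a b : ℂ, -(a - b + 2 * 0) = -a + b := by intro a b; ring
    rw [heq, hcross, h2]
    exact le_add_of_nonneg_right hτ0
end

section
/- The trace τ_D on the quantum Heisenberg manifold, defined by τ_D(φ) = ∫_{[0,1]²} φ(x,y,0) dx dy, is δ-invariant for the derivations δ_X, δ_Y, δ_Z: τ_D(δ_X φ) = τ_D(δ_Y φ) = τ_D(δ_Z φ) = 0 for every smooth φ satisfying the periodicity condition φ(x+k, y, p) = e(-ckp(y-pν)) φ(x,y,p) for all k, p ∈ ℤ and periodic in y with period 1. -/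
open Real

/-- The trace τ_D(φ) = ∫₀¹∫₀¹ φ(x,y,0) dx dy. -/
noncomputable def tauD (φ : ℝ → ℝ → ℤ → ℂ) : ℂ :=
  ∫ x in (0 : ℝ)..1, ∫ y in (0 : ℝ)..1, φ x y 0

/-- The trace τ_D on the quantum Heisenberg manifold is invariant under the
derivations δ_X, δ_Y, δ_Z. -/
theorem stmt16 (c : ℕ) (hc : 0 < c) (μ ν : ℝ) (hμ : μ ≠ 0) (hν : ν ≠ 0)
    (φ : ℝ → ℝ → ℤ → ℂ)
    (hsm : ∀ p : ℤ, ContDiff ℝ (⊤ : ℕ∞) (fun xy : ℝ × ℝ => φ xy.1 xy.2 p))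
    (hper : ∀ (x y : ℝ) (p : ℤ), φ x (y + 1) p = φ x y p)
    (hcov : ∀ (k p : ℤ) (x y : ℝ),
      φ (x + k) y p = Complex.exp (2 * (π : ℂ) * Complex.I *
        (-((c : ℂ) * (k : ℂ) * (p : ℂ) * ((y : ℂ) - (p : ℂ) * (ν : ℂ))))) * φ x y p)
    (hfin : {p : ℤ | ∃ x y, φ x y p ≠ 0}.Finite) :
    tauD (deltaX φ) = 0 ∧ tauD (deltaY c μ φ) = 0 ∧ tauD (deltaZ φ) = 0 := by
  set F : ℝ × ℝ → ℂ := fun xy => φ xy.1 xy.2 0 with hFdef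
  have hF : ContDiff ℝ (⊤ : ℕ∞) F := hsm 0
  -- x-periodicity at p = 0
  have hx1 : ∀ x y : ℝ, φ (x + 1) y 0 = φ x y 0 := by
    intro x y
    have h := hcov 1 0 x y
    simpa using h
  -- δ_Z part
  have hZ : tauD (deltaZ φ) = 0 := by
    simp [tauD, deltaZ]
  -- δ_Y part
  have hY : tauD (deltaY c μ φ) = 0 := by
    unfold tauD deltaY
    have key : ∀ x : ℝ,
        (∫ y in (0:ℝ)..1, (-deriv (fun t => φ x t 0) y
          + 2 * (π : ℂ) * Complex.I * (c : ℂ) * ((0:ℤ) : ℂ) *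
            ((x : ℂ) - ((0:ℤ) : ℂ) * (μ : ℂ)) * φ x y 0)) = 0 := by
      intro x
      have hfc : ContDiff ℝ (⊤ : ℕ∞) (fun t : ℝ => φ x t 0) :=
        hF.comp (contDiff_const.prodMk contDiff_id)
      have h1 : (∫ y in (0:ℝ)..1, deriv (fun t => φ x t 0) y)
          = φ x 1 0 - φ x 0 0 :=
        intervalIntegral.integral_deriv_eq_sub
          (fun t _ => (hfc.differentiable (by simp)) t)
          ((hfc.continuous_deriv (by simp)).intervalIntegrable 0 1)
      have h2 : φ x 1 0 = φ x 0 0 := by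
        have := hper x 0 0; simpa using this
      simp only [Int.cast_zero, mul_zero, zero_mul, add_zero]
      rw [intervalIntegral.integral_neg, h1, h2, sub_self, neg_zero]
    simp only [key, intervalIntegral.integral_zero]
  -- δ_X part
  have hX : tauD (deltaX φ) = 0 := by
    unfold tauD deltaX
    -- the partial derivative as a continuous function on ℝ × ℝ
    have hderiv : ∀ z : ℝ × ℝ,
        deriv (fun t => φ t z.2 0) z.1 = fderiv ℝ F z (1, 0) := by
      intro z
      have hg : HasDerivAt (fun t : ℝ => (t, z.2)) ((1 : ℝ), (0 : ℝ)) z.1 :=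
        (hasDerivAt_id z.1).prodMk (hasDerivAt_const z.1 z.2)
      have := ((hF.differentiable (by simp)) z).hasFDerivAt.comp_hasDerivAt z.1 hg
      exact this.deriv
    have hcont : Continuous fun z : ℝ × ℝ => deriv (fun t => φ t z.2 0) z.1 := by
      have : (fun z : ℝ × ℝ => deriv (fun t => φ t z.2 0) z.1)
          = fun z => fderiv ℝ F z (1, 0) := funext hderiv
      rw [this]
      exact (hF.continuous_fderiv (by simp)).clm_apply continuous_const
    set f : ℝ × ℝ → ℂ := fun z => deriv (fun t => φ t z.2 0) z.1 with hfdef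
    have hint : MeasureTheory.Integrable (Function.uncurry fun x y => f (x, y))
        ((MeasureTheory.volume.restrict (Set.Ioc (0:ℝ) 1)).prod
          (MeasureTheory.volume.restrict (Set.Ioc (0:ℝ) 1))) := by
      rw [MeasureTheory.Measure.prod_restrict]
      have hIcc : MeasureTheory.IntegrableOn f
          (Set.Icc (0:ℝ) 1 ×ˢ Set.Icc (0:ℝ) 1) := by
        exact hcont.continuousOn.integrableOn_compact (isCompact_Icc.prod isCompact_Icc)
      exact (hIcc.mono_set (Set.prod_mono Set.Ioc_subset_Icc_self
        Set.Ioc_subset_Icc_self)).congr (by rfl)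
    have hswap :
        (∫ x in Set.Ioc (0:ℝ) 1, ∫ y in Set.Ioc (0:ℝ) 1, f (x, y))
          = ∫ y in Set.Ioc (0:ℝ) 1, ∫ x in Set.Ioc (0:ℝ) 1, f (x, y) :=
      MeasureTheory.integral_integral_swap hint
    have hinner : ∀ y : ℝ, (∫ x in Set.Ioc (0:ℝ) 1, f (x, y)) = 0 := by
      intro y
      have hfc : ContDiff ℝ (⊤ : ℕ∞) (fun t : ℝ => φ t y 0) :=
        hF.comp (contDiff_id.prodMk contDiff_const)
      have h1 : (∫ x in (0:ℝ)..1, deriv (fun t => φ t y 0) x)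
          = φ 1 y 0 - φ 0 y 0 :=
        intervalIntegral.integral_deriv_eq_sub
          (fun t _ => (hfc.differentiable (by simp)) t)
          ((hfc.continuous_deriv (by simp)).intervalIntegrable 0 1)
      have h2 : φ 1 y 0 = φ 0 y 0 := by
        have := hx1 0 y; simpa using this
      have : (∫ x in (0:ℝ)..1, f (x, y)) = 0 := by
        simp only [hfdef]
        rw [h1, h2, sub_self]
      rw [← intervalIntegral.integral_of_le (by norm_num : (0:ℝ) ≤ 1)]
      exact this
    calc (∫ x in (0:ℝ)..1, ∫ y in (0:ℝ)..1, -deriv (fun t => φ t y 0) x)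
        = -(∫ x in (0:ℝ)..1, ∫ y in (0:ℝ)..1, f (x, y)) := by
          simp [intervalIntegral.integral_neg, hfdef]
      _ = -(∫ x in Set.Ioc (0:ℝ) 1, ∫ y in Set.Ioc (0:ℝ) 1, f (x, y)) := by
          rw [intervalIntegral.integral_of_le (by norm_num : (0:ℝ) ≤ 1)]
          congr 1
          refine MeasureTheory.setIntegral_congr_fun measurableSet_Ioc (fun x _ => ?_)
          rw [intervalIntegral.integral_of_le (by norm_num : (0:ℝ) ≤ 1)]
      _ = 0 := by rw [hswap]; simp [hinner]
  exact ⟨hX, hY, hZ⟩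
end

section
/- If ∇ is a compatible connection and u is a unitary element of E = End_A(Ξ), then the gauge transformation preserves the Yang–Mills functional: YM(γ_u(∇)) = YM(∇), where (γ_u(∇))_X ξ = u(∇_X(u*(ξ))). More precisely, {Θ_{γ_u(∇)}, Θ_{γ_u(∇)}} = u{Θ_∇, Θ_∇}u*, and since τ_E is a trace, YM(γ_u(∇)) = -τ_E({Θ_{γ_u(∇)}, Θ_{γ_u(∇)}}) = -τ_E({Θ_∇, Θ_∇}) = YM(∇). -/
/-- Gauge invariance of the Yang–Mills functional: for a unitary u,
{Θ_{γ_u(∇)}, Θ_{γ_u(∇)}} = u {Θ_∇, Θ_∇} u*, and hence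
YM(γ_u(∇)) = -τ_E({Θ_{γ_u(∇)}, Θ_{γ_u(∇)}}) = -τ_E({Θ_∇, Θ_∇}) = YM(∇),
where {Φ,Ψ} = Σ_{i<j} Φ(Z_i,Z_j)Ψ(Z_i,Z_j) and (γ_u(∇))_X = u ∘ ∇_X ∘ u*. -/
theorem stmt18 (Ξ G : Type*) [AddCommGroup Ξ] [Module ℂ Ξ] [LieRing G]
    (n : ℕ) (Z : Fin n → G)
    (N : G → Module.End ℂ Ξ) (u us : Module.End ℂ Ξ)
    (h1 : u * us = 1) (h2 : us * u = 1)
    (τ : Module.End ℂ Ξ →ₗ[ℂ] ℂ)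
    (htr : ∀ a b : Module.End ℂ Ξ, τ (a * b) = τ (b * a)) :
    let Θ : G → G → Module.End ℂ Ξ := fun X Y => N X * N Y - N Y * N X - N ⁅X, Y⁆
    let Θu : G → G → Module.End ℂ Ξ := fun X Y =>
      (u * N X * us) * (u * N Y * us) - (u * N Y * us) * (u * N X * us) - u * N ⁅X, Y⁆ * us
    (∑ i : Fin n, ∑ j : Fin n, if i < j then Θu (Z i) (Z j) * Θu (Z i) (Z j) else 0)
        = u * (∑ i : Fin n, ∑ j : Fin n, if i < j then Θ (Z i) (Z j) * Θ (Z i) (Z j) else 0) * us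
      ∧ -τ (∑ i : Fin n, ∑ j : Fin n, if i < j then Θu (Z i) (Z j) * Θu (Z i) (Z j) else 0)
        = -τ (∑ i : Fin n, ∑ j : Fin n, if i < j then Θ (Z i) (Z j) * Θ (Z i) (Z j) else 0) := by
  intro Θ Θu
  have hx : ∀ a b : Module.End ℂ Ξ, (u * a * us) * (u * b * us) = u * (a * b) * us := by
    intro a b
    calc (u * a * us) * (u * b * us) = u * a * (us * u) * b * us := by noncomm_ring
      _ = u * (a * b) * us := by rw [h2]; noncomm_ring
  have key : ∀ X Y, Θu X Y = u * Θ X Y * us := by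
    intro X Y
    simp only [Θ, Θu, hx]
    noncomm_ring
  have keym : ∀ X Y, Θu X Y * Θu X Y = u * (Θ X Y * Θ X Y) * us := by
    intro X Y
    rw [key, hx]
  have hsum : (∑ i : Fin n, ∑ j : Fin n, if i < j then Θu (Z i) (Z j) * Θu (Z i) (Z j) else 0)
      = u * (∑ i : Fin n, ∑ j : Fin n, if i < j then Θ (Z i) (Z j) * Θ (Z i) (Z j) else 0) * us := by
    rw [Finset.mul_sum, Finset.sum_mul]
    refine Finset.sum_congr rfl fun i _ => ?_
    rw [Finset.mul_sum, Finset.sum_mul]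
    refine Finset.sum_congr rfl fun j _ => ?_
    split
    · exact keym _ _
    · simp
  refine ⟨hsum, ?_⟩
  rw [hsum]
  congr 1
  have := htr (u * (∑ i : Fin n, ∑ j : Fin n, if i < j then Θ (Z i) (Z j) * Θ (Z i) (Z j) else 0)) us
  rw [this, ← mul_assoc, h2, one_mul]
end
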